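/- arXiv:1209.3979 — 4 statements merged into one kernel-verified Lean document; each statement's English description precedes it below -/
import Mathlib

section
/- Every generalised ray R is flasque; indeed the map τ : R → R given by τ(x) = x + 1 witnesses flasqueness. -/
open scoped NNReal

namespace CoarsePaper

variable {X Y : Type*}

/-- Composition `M N = {(x,z) | ∃ y, (x,y) ∈ M ∧ (y,z) ∈ N}` of subsets of `X × X`. -/
def Comp (M N : Set (X × X)) : Set (X × X) :=
  {p | ∃ y, (p.1, y) ∈ M ∧ (y, p.2) ∈ N}

/-- A collection `c` of subsets of `X × X` (the *controlled sets*) is a coarse structure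
if it contains the diagonal and is closed under subsets, finite unions, reflection in the
diagonal, and composition. -/
structure IsCoarseStructure (c : Set (Set (X × X))) : Prop where
  diag_mem : Set.diagonal X ∈ c
  subset_mem : ∀ ⦃M N : Set (X × X)⦄, M ∈ c → N ⊆ M → N ∈ c
  union_mem : ∀ ⦃M N : Set (X × X)⦄, M ∈ c → N ∈ c → M ∪ N ∈ c
  swap_mem : ∀ ⦃M : Set (X × X)⦄, M ∈ c → Prod.swap '' M ∈ c
  comp_mem : ∀ ⦃M N : Set (X × X)⦄, M ∈ c → N ∈ c → Comp M N ∈ c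

/-- A set `B ⊆ X` is bounded if `B = M_x = {y | (x,y) ∈ M}` for some controlled `M` and
some point `x`. -/
def IsBounded (c : Set (Set (X × X))) (B : Set X) : Prop :=
  ∃ M ∈ c, ∃ x : X, B = {y | (x, y) ∈ M}

/-- Two maps `f g : S → X` into a coarse space are close if `{(f s, g s) | s ∈ S}` is
controlled. -/
def Close {S : Type*} (c : Set (Set (X × X))) (f g : S → X) : Prop :=
  {p : X × X | ∃ s, p = (f s, g s)} ∈ c

/-- A map between coarse spaces is a coarse map if images of controlled sets are controlled
and preimages of bounded sets are bounded. -/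
def IsCoarseMap (cX : Set (Set (X × X))) (cY : Set (Set (Y × Y))) (f : X → Y) : Prop :=
  (∀ M ∈ cX, (fun p : X × X => (f p.1, f p.2)) '' M ∈ cY) ∧
    ∀ B : Set Y, IsBounded cY B → IsBounded cX (f ⁻¹' B)

/-- A coarse structure on a topological space is compatible with the topology if every
controlled set is contained in an open controlled set and the closure of every bounded set
is compact. -/
def Compatible [TopologicalSpace X] (c : Set (Set (X × X))) : Prop :=
  (∀ M ∈ c, ∃ U ∈ c, IsOpen U ∧ M ⊆ U) ∧
    ∀ B : Set X, IsBounded c B → IsCompact (closure B)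

/-- The coarse structure on the space `[0,∞) = ℝ≥0` making it a generalised ray:
a coarse structure compatible with the topology, closed under sums `M + N`, under the
squeezing operation `Mˢ`, and under translations `a + M`. -/
structure IsGeneralisedRay (c : Set (Set (ℝ≥0 × ℝ≥0))) : Prop where
  coarse : IsCoarseStructure c
  compatible : Compatible c
  sum_mem : ∀ ⦃M N : Set (ℝ≥0 × ℝ≥0)⦄, M ∈ c → N ∈ c →
    {p : ℝ≥0 × ℝ≥0 | ∃ u v x y, (u, v) ∈ M ∧ (x, y) ∈ N ∧ p = (u + x, v + y)} ∈ c
  squeeze_mem : ∀ ⦃M : Set (ℝ≥0 × ℝ≥0)⦄, M ∈ c →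
    {p : ℝ≥0 × ℝ≥0 | ∃ x y, (x, y) ∈ M ∧ x ≤ p.1 ∧ p.1 ≤ y ∧ x ≤ p.2 ∧ p.2 ≤ y} ∈ c
  translate_mem : ∀ (a : ℝ≥0) ⦃M : Set (ℝ≥0 × ℝ≥0)⦄, M ∈ c →
    {p : ℝ≥0 × ℝ≥0 | ∃ x y, (x, y) ∈ M ∧ p = (a + x, a + y)} ∈ c

/-- The bounded coarse structure of a (pseudo)metric space: a set is controlled iff it is
contained in some neighbourhood of the diagonal `{(x,y) | dist x y < r}`, `r > 0`. -/
def metricC (X : Type*) [PseudoMetricSpace X] : Set (Set (X × X)) :=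
  {M | ∃ r : ℝ, 0 < r ∧ M ⊆ {p : X × X | dist p.1 p.2 < r}}

/-- The map `τ : X → X` witnesses flasqueness of the coarse space `(X, c)`:
the iterated images `τⁿ[X]` eventually miss every bounded set, the union
`⋃ₙ (τ × τ)ⁿ[M]` of iterated images of any controlled set is controlled, and `τ` is close
to the identity. -/
def FlasqueWitness (c : Set (Set (X × X))) (τ : X → X) : Prop :=
  (∀ B : Set X, IsBounded c B → ∃ N : ℕ, ∀ n ≥ N, Set.range τ^[n] ∩ B = ∅) ∧
    (∀ M ∈ c, (⋃ n : ℕ, (Prod.map τ τ)^[n] '' M) ∈ c) ∧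
    Close c τ (id : X → X)

/-- A coarse space is flasque if some map witnesses flasqueness. -/
def IsFlasque (c : Set (Set (X × X))) : Prop :=
  ∃ τ : X → X, FlasqueWitness c τ

/-! Translation by `a > 0` pushes every point off to infinity, and bounded sets have
compact closure, so they are eventually missed. The iterated images of a controlled set `M` all lie
in the controlled sum `M + Δ`. Finally, compatibility with the topology yields a controlled set
containing some `(0, δ)` with `δ > 0`; adding it to itself repeatedly gives `(0, r)` with `r ≥ a`, and
squeezing `Δ + {(0, r)}` shows that `x ↦ x + a` is close to the identity. -/

lemma IsBounded.bddAbove {Z : Type*} [LinearOrder Z] [TopologicalSpace Z] [ClosedIciTopology Z]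
    [Nonempty Z] {c : Set (Set (Z × Z))} (hc : Compatible c) {B : Set Z} (hB : IsBounded c B) :
    BddAbove B :=
  (hc.2 B hB).bddAbove.mono subset_closure

lemma exists_range_iterate_add_inter_eq_empty {a : ℝ≥0} (ha : 0 < a) {B : Set ℝ≥0}
    (hB : BddAbove B) : ∃ N : ℕ, ∀ n ≥ N, Set.range (fun x : ℝ≥0 => x + a)^[n] ∩ B = ∅ := by
  obtain ⟨C, hC⟩ := hB
  obtain ⟨N, hN⟩ := exists_lt_nsmul ha C
  refine ⟨N, fun n hn => Set.eq_empty_of_forall_notMem ?_⟩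
  rintro _ ⟨⟨x, rfl⟩, hxB⟩
  rw [add_right_iterate] at hxB
  have : N • a ≤ x + n • a := (nsmul_le_nsmul_left ha.le hn).trans le_add_self
  exact (hN.trans_le this).not_ge (hC hxB)

namespace IsGeneralisedRay

variable {c : Set (Set (ℝ≥0 × ℝ≥0))}

lemma iUnion_iterate_image_mem (hc : IsGeneralisedRay c) (a : ℝ≥0) {M : Set (ℝ≥0 × ℝ≥0)}
    (hM : M ∈ c) : (⋃ n : ℕ, (Prod.map (fun x : ℝ≥0 => x + a) (fun x => x + a))^[n] '' M) ∈ c := by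
  refine hc.coarse.subset_mem (hc.sum_mem hM hc.coarse.diag_mem) ?_
  rintro _ ⟨_, ⟨n, rfl⟩, ⟨x, y⟩, hxy, rfl⟩
  simp only [Prod.map_iterate, add_right_iterate, Prod.map_apply]
  exact ⟨x, y, n • a, n • a, hxy, rfl, rfl⟩

lemma exists_mem_nsmul (hc : IsGeneralisedRay c) {M : Set (ℝ≥0 × ℝ≥0)} (hM : M ∈ c)
    {x y : ℝ≥0} (hxy : (x, y) ∈ M) (n : ℕ) : ∃ M' ∈ c, (n • x, n • y) ∈ M' := by
  induction n with
  | zero => exact ⟨Set.diagonal ℝ≥0, hc.coarse.diag_mem, by simp⟩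
  | succ n ih =>
    obtain ⟨M', hM', hmem⟩ := ih
    exact ⟨_, hc.sum_mem hM' hM, _, _, x, y, hmem, hxy, by simp only [succ_nsmul]⟩

lemma exists_mem_zero_pos (hc : IsGeneralisedRay c) : ∃ U ∈ c, ∃ δ > 0, ((0 : ℝ≥0), δ) ∈ U := by
  obtain ⟨U, hU, hUopen, hdiagU⟩ := hc.compatible.1 _ hc.coarse.diag_mem
  have hnhds : ∀ᶠ t in nhds (0 : ℝ≥0), ((0 : ℝ≥0), t) ∈ U :=
    (Continuous.prodMk_right 0).continuousAt.preimage_mem_nhds (hUopen.mem_nhds (hdiagU rfl))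
  exact ⟨U, hU, hnhds.exists_gt⟩

lemma exists_mem_zero_ge (hc : IsGeneralisedRay c) (a : ℝ≥0) :
    ∃ M ∈ c, ∃ r ≥ a, ((0 : ℝ≥0), r) ∈ M := by
  obtain ⟨U, hU, δ, hδ, hδU⟩ := hc.exists_mem_zero_pos
  obtain ⟨n, hn⟩ := exists_lt_nsmul hδ a
  obtain ⟨M, hM, hmem⟩ := hc.exists_mem_nsmul hU hδU n
  exact ⟨M, hM, n • δ, hn.le, by simpa using hmem⟩

lemma close_add_id (hc : IsGeneralisedRay c) (a : ℝ≥0) :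
    Close c (fun x : ℝ≥0 => x + a) id := by
  obtain ⟨M, hM, r, hr, hmem⟩ := hc.exists_mem_zero_ge a
  refine hc.coarse.subset_mem (hc.squeeze_mem (hc.sum_mem hc.coarse.diag_mem hM)) ?_
  rintro _ ⟨s, rfl⟩
  exact ⟨s, s + r, ⟨s, s, 0, r, rfl, hmem, by simp⟩, le_self_add, add_le_add_right hr s, le_rfl,
    le_self_add⟩

lemma flasqueWitness_add (hc : IsGeneralisedRay c) {a : ℝ≥0} (ha : 0 < a) :
    FlasqueWitness c (fun x : ℝ≥0 => x + a) :=
  ⟨fun _ hB => exists_range_iterate_add_inter_eq_empty ha (hB.bddAbove hc.compatible),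
    fun _ hM => hc.iUnion_iterate_image_mem a hM, hc.close_add_id a⟩

end IsGeneralisedRay

/-- Every generalised ray is flasque; indeed `τ(x) = x + 1` witnesses
flasqueness. -/
theorem generalisedRay_flasque
    (c : Set (Set (ℝ≥0 × ℝ≥0))) (hc : IsGeneralisedRay c) :
    IsFlasque c ∧ FlasqueWitness c (fun x : ℝ≥0 => x + 1) :=
  ⟨⟨_, hc.flasqueWitness_add one_pos⟩, hc.flasqueWitness_add one_pos⟩

end CoarsePaper
end

section
/- Let R be a generalised ray, let X be a coarse space, and let p : X → R be a coarse map. Then the maps i₀, i₁ : X → I_pX defined by i₀(x) = (x,0) and i₁(x) = (x, p(x)+1) are coarse maps. -/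
open scoped NNReal

namespace CoarsePaper

variable {X Y : Type*}

/-- The product coarse structure on `X × Y`: a set is controlled iff it is contained in
`{((u,v),(x,y)) | (u,x) ∈ M₁, (v,y) ∈ M₂}` for controlled `M₁ ⊆ X × X`, `M₂ ⊆ Y × Y`. -/
def prodC (cX : Set (Set (X × X))) (cY : Set (Set (Y × Y))) :
    Set (Set ((X × Y) × (X × Y))) :=
  {M | ∃ M₁ ∈ cX, ∃ M₂ ∈ cY,
    M ⊆ {p : (X × Y) × (X × Y) | (p.1.1, p.2.1) ∈ M₁ ∧ (p.1.2, p.2.2) ∈ M₂}}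

/-- The subspace coarse structure on `A ⊆ X`: the controlled sets are (identified with)
the controlled sets of `X` contained in `A × A`. -/
def subC (cX : Set (Set (X × X))) (A : Set X) : Set (Set (↥A × ↥A)) :=
  {M : Set (↥A × ↥A) | (fun p : ↥A × ↥A => ((p.1 : X), (p.2 : X))) '' M ∈ cX}

/-- The `p`-cylinder `I_pX = {(x,t) ∈ X × R | t ≤ p(x) + 1}`. -/
def cyl (p : X → ℝ≥0) : Set (X × ℝ≥0) := {q | q.2 ≤ p q.1 + 1}

/-- The bottom inclusion `i₀ : X → I_pX`, `i₀(x) = (x, 0)`. -/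
def i0 (p : X → ℝ≥0) (x : X) : ↥(cyl p) := ⟨(x, 0), by simp [cyl]⟩

/-- The top inclusion `i₁ : X → I_pX`, `i₁(x) = (x, p(x) + 1)`. -/
def i1 (p : X → ℝ≥0) (x : X) : ↥(cyl p) := ⟨(x, p x + 1), by simp [cyl]⟩

/-- For a generalised ray `R`, a coarse space `X` and a coarse map
`p : X → R`, the maps `i₀, i₁ : X → I_pX`, `i₀(x) = (x,0)` and `i₁(x) = (x, p(x)+1)`,
are coarse maps (for the subspace structure of the product structure on `I_pX`). -/
theorem i0_i1_coarse
    {X : Type*} (cX : Set (Set (X × X))) (hX : IsCoarseStructure cX)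
    (cR : Set (Set (ℝ≥0 × ℝ≥0))) (hR : IsGeneralisedRay cR)
    (p : X → ℝ≥0) (hp : IsCoarseMap cX cR p) :
    IsCoarseMap cX (subC (prodC cX cR) (cyl p)) (i0 p) ∧
      IsCoarseMap cX (subC (prodC cX cR) (cyl p)) (i1 p) := by
  obtain ⟨hpimg, hpbdd⟩ := hp
  -- boundedness of preimages: works for any section of the first projection
  have hbdd : ∀ (f : X → ↥(cyl p)), (∀ x, ((f x : X × ℝ≥0)).1 = x) →
      ∀ B, IsBounded (subC (prodC cX cR) (cyl p)) B → IsBounded cX (f ⁻¹' B) := by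
    intro f hf B hB
    obtain ⟨M, hM, q, rfl⟩ := hB
    obtain ⟨M₁, hM₁, M₂, hM₂, hsub⟩ := hM
    set q₀ : X := (q : X × ℝ≥0).1 with hq₀
    set S : Set X := f ⁻¹' {y | (q, y) ∈ M} with hS
    refine ⟨{r : X × X | r.1 = q₀ ∧ r.2 ∈ S}, ?_, q₀, ?_⟩
    · refine hX.subset_mem hM₁ ?_
      rintro ⟨a, b⟩ ⟨rfl, hb⟩
      have : ((q : X × ℝ≥0), ((f b) : X × ℝ≥0)) ∈
          {pr : (X × ℝ≥0) × (X × ℝ≥0) | (pr.1.1, pr.2.1) ∈ M₁ ∧ (pr.1.2, pr.2.2) ∈ M₂} :=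
        hsub ⟨(q, f b), hb, rfl⟩
      simpa [hf b] using this.1
    · ext y
      simp [hS]
  constructor
  · constructor
    · intro M hM
      refine ⟨M, hM, Set.diagonal ℝ≥0, hR.coarse.diag_mem, ?_⟩
      rintro r ⟨⟨a, b⟩, ⟨⟨u, x⟩, hux, h1⟩, rfl⟩
      cases h1
      exact ⟨hux, rfl⟩
    · exact hbdd (i0 p) (fun x => rfl)
  · constructor
    · intro M hM
      refine ⟨M, hM,
        {r : ℝ≥0 × ℝ≥0 | ∃ x y, (x, y) ∈ (fun pr : X × X => (p pr.1, p pr.2)) '' M ∧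
          r = (1 + x, 1 + y)}, hR.translate_mem 1 (hpimg M hM), ?_⟩
      rintro r ⟨⟨a, b⟩, ⟨⟨u, x⟩, hux, h1⟩, rfl⟩
      cases h1
      refine ⟨hux, p u, p x, ⟨(u, x), hux, rfl⟩, ?_⟩
      simp [i1, add_comm]
    · exact hbdd (i1 p) (fun x => rfl)

end CoarsePaper
end

section
/- Let R be a generalised ray, let X and Y be coarse spaces, and let f₀, f₁ : X → Y be close coarse maps. Then for every coarse map p : X → R there is an elementary coarse homotopy H : I_pX → Y with f₀ = H∘i₀ and f₁ = H∘i₁; in particular, close coarse maps are coarsely homotopic whenever some coarse map X → R exists. -/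
/-! The homotopy equals `f₀ ∘ π` below the top of the cylinder and `f₁ ∘ π` on it, where
`π : I_pX → X` is the projection, so it is close to `f₀ ∘ π`; a map close to a coarse map is
coarse. The projection is coarse because over a bounded set `B` the cylinder lies below height
`sup p(B) + 1`, and in a generalised ray every column `{0} × [0, a]` is controlled: a short one
lies in an open controlled neighbourhood of the diagonal, and sums of controlled sets stretch it. -/

open scoped NNReal

namespace CoarsePaper

variable {X Y : Type*}

section CoarseSpaces

variable {S T Z : Type*} {c cX : Set (Set (X × X))} {cY : Set (Set (Y × Y))}
  {cZ : Set (Set (Z × Z))}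

theorem IsBounded.mono (hc : IsCoarseStructure c) {B B' : Set X} (hB : IsBounded c B)
    (h : B' ⊆ B) : IsBounded c B' := by
  obtain ⟨M, hM, x, rfl⟩ := hB
  refine ⟨M ∩ {q | q.2 ∈ B'}, hc.subset_mem hM Set.inter_subset_left, x, ?_⟩
  ext y
  exact ⟨fun hy => ⟨h hy, hy⟩, fun hy => hy.2⟩

theorem IsBounded.comp_mem (hc : IsCoarseStructure c) {B : Set X} (hB : IsBounded c B)
    {N : Set (X × X)} (hN : N ∈ c) : IsBounded c {y | ∃ b ∈ B, (b, y) ∈ N} := by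
  obtain ⟨M, hM, x, rfl⟩ := hB
  exact ⟨Comp M N, hc.comp_mem hM hN, x, rfl⟩

theorem Close.comp_right (hc : IsCoarseStructure c) {f g : S → X} (h : Close c f g)
    (k : T → S) : Close c (f ∘ k) (g ∘ k) :=
  hc.subset_mem h fun _ ⟨t, ht⟩ => ⟨k t, ht⟩

theorem Close.of_forall_eq_or_eq (hc : IsCoarseStructure c) {f g k : S → X} (h : Close c f g)
    (hk : ∀ s, k s = f s ∨ k s = g s) : Close c f k := by
  refine hc.subset_mem (hc.union_mem hc.diag_mem h) ?_
  rintro _ ⟨s, rfl⟩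
  rcases hk s with hs | hs
  · exact Or.inl (Set.mem_diagonal_iff.2 hs.symm)
  · exact Or.inr ⟨s, by rw [hs]⟩

theorem isCoarseStructure_prodC (hX : IsCoarseStructure cX) (hY : IsCoarseStructure cY) :
    IsCoarseStructure (prodC cX cY) where
  diag_mem := ⟨_, hX.diag_mem, _, hY.diag_mem, fun _ hq => ⟨congrArg Prod.fst hq,
    congrArg Prod.snd hq⟩⟩
  subset_mem := fun _ _ ⟨M₁, h₁, M₂, h₂, hM⟩ hN => ⟨M₁, h₁, M₂, h₂, hN.trans hM⟩
  union_mem := fun _ _ ⟨M₁, h₁, M₂, h₂, hM⟩ ⟨N₁, g₁, N₂, g₂, hN⟩ =>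
    ⟨_, hX.union_mem h₁ g₁, _, hY.union_mem h₂ g₂, Set.union_subset
      (fun _ hq => ⟨Or.inl (hM hq).1, Or.inl (hM hq).2⟩)
      (fun _ hq => ⟨Or.inr (hN hq).1, Or.inr (hN hq).2⟩)⟩
  swap_mem := fun _ ⟨M₁, h₁, M₂, h₂, hM⟩ => by
    refine ⟨_, hX.swap_mem h₁, _, hY.swap_mem h₂, ?_⟩
    rintro _ ⟨q, hq, rfl⟩
    exact ⟨⟨_, (hM hq).1, rfl⟩, ⟨_, (hM hq).2, rfl⟩⟩
  comp_mem := fun _ _ ⟨M₁, h₁, M₂, h₂, hM⟩ ⟨N₁, g₁, N₂, g₂, hN⟩ => by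
    refine ⟨_, hX.comp_mem h₁ g₁, _, hY.comp_mem h₂ g₂, ?_⟩
    rintro _ ⟨z, hM', hN'⟩
    exact ⟨⟨z.1, (hM hM').1, (hN hN').1⟩, ⟨z.2, (hM hM').2, (hN hN').2⟩⟩

theorem isCoarseStructure_subC (hX : IsCoarseStructure cX) (A : Set X) :
    IsCoarseStructure (subC cX A) where
  diag_mem := hX.subset_mem hX.diag_mem <| by
    rintro _ ⟨q, hq, rfl⟩
    exact congrArg Subtype.val hq
  subset_mem := fun _ _ hM hN => hX.subset_mem hM (Set.image_mono hN)
  union_mem := fun _ _ hM hN => by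
    simpa only [subC, Set.mem_ofPred_eq, Set.image_union] using hX.union_mem hM hN
  swap_mem := fun _ hM => by
    refine hX.subset_mem (hX.swap_mem hM) ?_
    rintro _ ⟨_, ⟨q, hq, rfl⟩, rfl⟩
    exact ⟨_, ⟨q, hq, rfl⟩, rfl⟩
  comp_mem := fun _ _ hM hN => by
    refine hX.subset_mem (hX.comp_mem hM hN) ?_
    rintro _ ⟨q, ⟨b, hb₁, hb₂⟩, rfl⟩
    exact ⟨b, ⟨_, hb₁, rfl⟩, ⟨_, hb₂, rfl⟩⟩

theorem IsCoarseMap.isBounded_image (hY : IsCoarseStructure cY) {f : X → Y}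
    (hf : IsCoarseMap cX cY f) {B : Set X} (hB : IsBounded cX B) : IsBounded cY (f '' B) := by
  obtain ⟨M, hM, x, rfl⟩ := hB
  refine IsBounded.mono hY ⟨_, hf.1 M hM, f x, rfl⟩ ?_
  rintro _ ⟨y, hy, rfl⟩
  exact ⟨(x, y), hy, rfl⟩

theorem IsCoarseMap.comp {g : Y → Z} {f : X → Y} (hg : IsCoarseMap cY cZ g)
    (hf : IsCoarseMap cX cY f) : IsCoarseMap cX cZ (g ∘ f) :=
  ⟨fun M hM => by simpa only [Set.image_image, Function.comp_apply] using hg.1 _ (hf.1 M hM),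
    fun B hB => hf.2 _ (hg.2 B hB)⟩

theorem IsCoarseMap.of_close (hX : IsCoarseStructure cX) (hY : IsCoarseStructure cY)
    {f g : X → Y} (hf : IsCoarseMap cX cY f) (h : Close cY f g) : IsCoarseMap cX cY g := by
  refine ⟨fun M hM => ?_, fun B hB => ?_⟩
  · refine hY.subset_mem (hY.comp_mem (hY.swap_mem h) (hY.comp_mem (hf.1 M hM) h)) ?_
    rintro _ ⟨q, hq, rfl⟩
    exact ⟨f q.1, ⟨_, ⟨q.1, rfl⟩, rfl⟩, f q.2, ⟨q, hq, rfl⟩, q.2, rfl⟩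
  · refine (hf.2 _ (hB.comp_mem hY (hY.swap_mem h))).mono hX ?_
    intro x hx
    exact ⟨g x, hx, _, ⟨x, rfl⟩, rfl⟩

end CoarseSpaces

def column (a : ℝ≥0) : Set (ℝ≥0 × ℝ≥0) := {q | q.1 = 0 ∧ q.2 ≤ a}

namespace IsGeneralisedRay

variable {cR : Set (Set (ℝ≥0 × ℝ≥0))}

theorem exists_pos_column_mem (hR : IsGeneralisedRay cR) : ∃ δ > 0, column δ ∈ cR := by
  obtain ⟨U, hU, hUo, hΔU⟩ := hR.compatible.1 _ hR.coarse.diag_mem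
  have hU0 : (fun t : ℝ≥0 => ((0 : ℝ≥0), t)) ⁻¹' U ∈ nhdsWithin (0 : ℝ≥0) (Set.Ici 0) :=
    mem_nhdsWithin_of_mem_nhds <|
      (continuous_const.prodMk continuous_id).continuousAt.preimage_mem_nhds
        (hUo.mem_nhds (hΔU rfl))
  obtain ⟨δ, hδ, hδU⟩ := mem_nhdsGE_iff_exists_Icc_subset.1 hU0
  refine ⟨δ, hδ, hR.coarse.subset_mem hU ?_⟩
  rintro ⟨_, t⟩ ⟨rfl, ht⟩
  exact hδU ⟨zero_le, ht⟩

theorem column_add_mem (hR : IsGeneralisedRay cR) {a b : ℝ≥0} (ha : column a ∈ cR)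
    (hb : column b ∈ cR) : column (a + b) ∈ cR := by
  refine hR.coarse.subset_mem (hR.sum_mem ha hb) ?_
  rintro ⟨_, t⟩ ⟨rfl, ht⟩
  exact ⟨0, t - b, 0, min t b, ⟨rfl, tsub_le_iff_right.2 ht⟩, ⟨rfl, min_le_right t b⟩,
    by rw [tsub_add_min, add_zero]⟩

theorem column_mem (hR : IsGeneralisedRay cR) (a : ℝ≥0) : column a ∈ cR := by
  obtain ⟨δ, hδ, hδc⟩ := hR.exists_pos_column_mem
  have hn : ∀ n : ℕ, column (n • δ) ∈ cR := by
    intro n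
    induction n with
    | zero =>
      refine hR.coarse.subset_mem hR.coarse.diag_mem ?_
      rintro ⟨_, t⟩ ⟨rfl, ht⟩
      exact (nonpos_iff_eq_zero.1 (by simpa using ht)).symm
    | succ n ih => simpa only [succ_nsmul] using hR.column_add_mem ih hδc
  obtain ⟨n, hn'⟩ := Archimedean.arch a hδ
  exact hR.coarse.subset_mem (hn n) fun q hq => ⟨hq.1, hq.2.trans hn'⟩

theorem bddAbove_of_isBounded (hR : IsGeneralisedRay cR) {B : Set ℝ≥0}
    (hB : IsBounded cR B) : BddAbove B :=
  (hR.compatible.2 B hB).bddAbove.mono subset_closure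

end IsGeneralisedRay

section Cylinder

variable {cX : Set (Set (X × X))} {cY : Set (Set (Y × Y))} {cR : Set (Set (ℝ≥0 × ℝ≥0))}
  {p : X → ℝ≥0}

def cylProj (p : X → ℝ≥0) (z : ↥(cyl p)) : X := z.1.1

theorem isCoarseMap_cylProj (hX : IsCoarseStructure cX) (hR : IsGeneralisedRay cR)
    (hp : IsCoarseMap cX cR p) : IsCoarseMap (subC (prodC cX cR) (cyl p)) cX (cylProj p) := by
  refine ⟨fun M ⟨M₁, h₁, _, _, hM⟩ => hX.subset_mem h₁ ?_, ?_⟩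
  · rintro _ ⟨q, hq, rfl⟩
    exact (hM ⟨q, hq, rfl⟩).1
  rintro _ ⟨MX, hMX, x₀, rfl⟩
  obtain ⟨c, hc⟩ := hR.bddAbove_of_isBounded (hp.isBounded_image hR.coarse ⟨MX, hMX, x₀, rfl⟩)
  refine ⟨{q | q.1 = i0 p x₀ ∧ (x₀, cylProj p q.2) ∈ MX},
    ⟨MX, hMX, column (c + 1), hR.column_mem _, ?_⟩, i0 p x₀, ?_⟩
  · rintro _ ⟨⟨_, w⟩, ⟨rfl, hw⟩, rfl⟩
    exact ⟨hw, rfl, w.2.trans (add_le_add_left (hc ⟨_, hw, rfl⟩) 1)⟩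
  · ext w
    exact ⟨fun hw => ⟨rfl, hw⟩, fun hw => hw.2⟩

noncomputable def closeHomotopy (p : X → ℝ≥0) (f₀ f₁ : X → Y) (z : ↥(cyl p)) : Y :=
  if z.1.2 = p z.1.1 + 1 then f₁ z.1.1 else f₀ z.1.1

theorem closeHomotopy_i0 (p : X → ℝ≥0) (f₀ f₁ : X → Y) (x : X) :
    closeHomotopy p f₀ f₁ (i0 p x) = f₀ x :=
  if_neg (add_pos_of_nonneg_of_pos zero_le one_pos).ne

theorem closeHomotopy_i1 (p : X → ℝ≥0) (f₀ f₁ : X → Y) (x : X) :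
    closeHomotopy p f₀ f₁ (i1 p x) = f₁ x :=
  if_pos rfl

theorem isCoarseMap_closeHomotopy (hX : IsCoarseStructure cX) (hY : IsCoarseStructure cY)
    (hR : IsGeneralisedRay cR) {f₀ f₁ : X → Y} (hf₀ : IsCoarseMap cX cY f₀)
    (hclose : Close cY f₀ f₁) (hp : IsCoarseMap cX cR p) :
    IsCoarseMap (subC (prodC cX cR) (cyl p)) cY (closeHomotopy p f₀ f₁) :=
  (hf₀.comp (isCoarseMap_cylProj hX hR hp)).of_close
    (isCoarseStructure_subC (isCoarseStructure_prodC hX hR.coarse) _) hY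
    ((hclose.comp_right hY (cylProj p)).of_forall_eq_or_eq hY fun _ =>
      (ite_eq_or_eq _ _ _).symm)

end Cylinder

theorem close_coarse_maps_elementary_homotopy_general
    {X Y : Type*} (cX : Set (Set (X × X))) (hX : IsCoarseStructure cX)
    (cY : Set (Set (Y × Y))) (hY : IsCoarseStructure cY)
    (cR : Set (Set (ℝ≥0 × ℝ≥0))) (hR : IsGeneralisedRay cR)
    (f₀ f₁ : X → Y)
    (hf₀ : IsCoarseMap cX cY f₀)
    (hclose : Close cY f₀ f₁)
    (p : X → ℝ≥0) (hp : IsCoarseMap cX cR p) :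
    ∃ H : ↥(cyl p) → Y,
      IsCoarseMap (subC (prodC cX cR) (cyl p)) cY H ∧
        (∀ x : X, H (i0 p x) = f₀ x) ∧ (∀ x : X, H (i1 p x) = f₁ x) :=
  ⟨closeHomotopy p f₀ f₁, isCoarseMap_closeHomotopy hX hY hR hf₀ hclose hp,
    closeHomotopy_i0 p f₀ f₁, closeHomotopy_i1 p f₀ f₁⟩

/-- Let `R` be a generalised ray, `X`, `Y` coarse spaces and
`f₀, f₁ : X → Y` close coarse maps.  Then for every coarse map `p : X → R` there is an
elementary coarse homotopy `H : I_pX → Y` with `f₀ = H ∘ i₀` and `f₁ = H ∘ i₁`; in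
particular close coarse maps are coarsely homotopic whenever some coarse map `X → R`
exists. -/
theorem close_coarse_maps_elementary_homotopy
    {X Y : Type*} (cX : Set (Set (X × X))) (hX : IsCoarseStructure cX)
    (cY : Set (Set (Y × Y))) (hY : IsCoarseStructure cY)
    (cR : Set (Set (ℝ≥0 × ℝ≥0))) (hR : IsGeneralisedRay cR)
    (f₀ f₁ : X → Y)
    (hf₀ : IsCoarseMap cX cY f₀) (hf₁ : IsCoarseMap cX cY f₁)
    (hclose : Close cY f₀ f₁)
    (p : X → ℝ≥0) (hp : IsCoarseMap cX cR p) :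
    ∃ H : ↥(cyl p) → Y,
      IsCoarseMap (subC (prodC cX cR) (cyl p)) cY H ∧
        (∀ x : X, H (i0 p x) = f₀ x) ∧ (∀ x : X, H (i1 p x) = f₁ x) :=
  close_coarse_maps_elementary_homotopy_general cX hX cY hY cR hR f₀ f₁ hf₀ hclose p hp

end CoarsePaper
end

section
/- Let R be a generalised ray and let n ≥ 1. Then the inclusion of the subspace (D_R^n)' = {(x,t) ∈ (R∨R)^n × R : t ≥ 1} into the coarse disk D_R^n = (R∨R)^n × R is a coarse equivalence; in particular the coarse spaces D_R^n and (D_R^n)' are coarsely equivalent. -/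
open scoped NNReal

namespace CoarsePaper

variable {X Y : Type*}

/-- The product coarse structure on a (finite) product `∀ i, Z i`: a set is controlled iff
it is contained in `{(f,g) | ∀ i, (f i, g i) ∈ M i}` for a family of controlled sets. -/
def piC {ι : Type*} {Z : ι → Type*} (c : ∀ i, Set (Set (Z i × Z i))) :
    Set (Set ((∀ i, Z i) × (∀ i, Z i))) :=
  {M | ∃ Mi : ∀ i, Set (Z i × Z i), (∀ i, Mi i ∈ c i) ∧
    M ⊆ {p : (∀ i, Z i) × (∀ i, Z i) | ∀ i, (p.1 i, p.2 i) ∈ Mi i}}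

/-- `B` is a finite union of bounded subsets. -/
def IsFinUnionBounded (c : Set (Set (X × X))) (B : Set X) : Prop :=
  ∃ (n : ℕ) (f : Fin n → Set X), (∀ i, IsBounded c (f i)) ∧ B = ⋃ i, f i

/-- The coarse disjoint union structure on `X ⊕ Y`: a set is controlled iff it is contained
in `M_X ∪ M_Y ∪ (D × D)` where `M_X`, `M_Y` are controlled and `D` is a finite union of
bounded subsets of `X` and of `Y`. -/
def sumC (cX : Set (Set (X × X))) (cY : Set (Set (Y × Y))) :
    Set (Set ((X ⊕ Y) × (X ⊕ Y))) :=
  {M | ∃ MX ∈ cX, ∃ MY ∈ cY, ∃ BX : Set X, ∃ BY : Set Y,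
    IsFinUnionBounded cX BX ∧ IsFinUnionBounded cY BY ∧
      M ⊆ (fun p : X × X => ((Sum.inl p.1 : X ⊕ Y), Sum.inl p.2)) '' MX ∪
          (fun p : Y × Y => ((Sum.inr p.1 : X ⊕ Y), Sum.inr p.2)) '' MY ∪
          (Sum.inl '' BX ∪ Sum.inr '' BY) ×ˢ (Sum.inl '' BX ∪ Sum.inr '' BY)}

/-- A coarse map `f` is a coarse equivalence if there is a coarse map `g` in the opposite
direction with `g ∘ f` and `f ∘ g` close to the respective identity maps. -/
def IsCoarseEquiv (cX : Set (Set (X × X))) (cY : Set (Set (Y × Y))) (f : X → Y) : Prop :=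
  IsCoarseMap cX cY f ∧
    ∃ g : Y → X, IsCoarseMap cY cX g ∧
      Close cX (g ∘ f) (id : X → X) ∧ Close cY (f ∘ g) (id : Y → Y)

/-- Two coarse spaces are coarsely equivalent if there is a coarse equivalence between
them. -/
def CoarselyEquivalent (cX : Set (Set (X × X))) (cY : Set (Set (Y × Y))) : Prop :=
  ∃ f : X → Y, IsCoarseEquiv cX cY f

/-- `m[S] = {y | (x,y) ∈ m for some x ∈ S}`. -/
def img (m : Set (X × X)) (S : Set X) : Set X := {y | ∃ x ∈ S, (x, y) ∈ m}

/-- A decomposition `X = A ∪ B` is coarsely excisive if for every controlled `m` there is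
a controlled `M` with `m[A] ∩ m[B] ⊆ M[A ∩ B]`. -/
def IsCoarselyExcisive (c : Set (Set (X × X))) (A B : Set X) : Prop :=
  A ∪ B = Set.univ ∧ ∀ m ∈ c, ∃ M ∈ c, img m A ∩ img m B ⊆ img M (A ∩ B)

/-- The underlying set `(R ∨ R)ⁿ × R` of the coarse `n`-disk. -/
abbrev DiskT (n : ℕ) : Type := (Fin n → ℝ≥0 ⊕ ℝ≥0) × ℝ≥0

/-- The coarse structure of the coarse `n`-disk `D_R^n = (R ∨ R)ⁿ × R`. -/
def diskC (c : Set (Set (ℝ≥0 × ℝ≥0))) (n : ℕ) : Set (Set (DiskT n × DiskT n)) :=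
  prodC (piC fun _ : Fin n => sumC c c) c

/-- The coarse `(n-1)`-sphere `S_R^{n-1} = (R ∨ R)ⁿ × {0}` as a subset of the `n`-disk. -/
def sphereSet (n : ℕ) : Set (DiskT n) := {q | q.2 = 0}

/-- The coarse structure of the coarse `(n-1)`-sphere `S_R^{n-1}`. -/
def sphereC (c : Set (Set (ℝ≥0 × ℝ≥0))) (n : ℕ) :
    Set (Set (↥(sphereSet n) × ↥(sphereSet n))) :=
  subC (diskC c n) (sphereSet n)

/-!
Pushing points up in the ray coordinate, `(x, t) ↦ (x, a + t)`, is a coarse inverse of the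
inclusion of `{(x, t) | a ≤ t}` into `X × R`, for any `X` whose coarse structure contains the
diagonal. Everything reduces to the shift `{(a + t, t)}` being controlled: the points `y` with
`(x, y)` in some controlled set form a clopen subset of the connected space `[0, ∞)` (controlled
sets lie in open controlled sets), so some controlled set contains `(a, 0)`, and its sum with
the diagonal contains the whole shift.
-/

section

variable {Z : Type*} {cX : Set (Set (X × X))} {cY : Set (Set (Y × Y))}

lemma IsBounded.mono_s7 {cz : Set (Set (Z × Z))}
    (hmono : ∀ ⦃M N : Set (Z × Z)⦄, M ∈ cz → N ⊆ M → N ∈ cz)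
    {B S : Set Z} (hB : IsBounded cz B) (h : S ⊆ B) : IsBounded cz S := by
  obtain ⟨M, hM, x, rfl⟩ := hB
  refine ⟨{p | p.1 = x ∧ p.2 ∈ S}, hmono hM ?_, x, ?_⟩
  · rintro ⟨_, y⟩ ⟨rfl, hy⟩
    exact h hy
  · ext y
    simp

lemma Close.comp_right_s7 {S T : Type*} {cz : Set (Set (Z × Z))}
    (hmono : ∀ ⦃M N : Set (Z × Z)⦄, M ∈ cz → N ⊆ M → N ∈ cz)
    {f g : S → Z} (h : Close cz f g) (k : T → S) : Close cz (f ∘ k) (g ∘ k) :=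
  hmono h <| by
    rintro _ ⟨t, rfl⟩
    exact ⟨k t, rfl⟩

lemma close_subC_iff {S : Type*} {cz : Set (Set (Z × Z))} {A : Set Z} {u v : S → A} :
    Close (subC cz A) u v ↔ Close cz (Subtype.val ∘ u) (Subtype.val ∘ v) := by
  refine Iff.of_eq (congrArg (· ∈ cz) ?_)
  ext p
  constructor
  · rintro ⟨_, ⟨s, rfl⟩, rfl⟩
    exact ⟨s, rfl⟩
  · rintro ⟨s, rfl⟩
    exact ⟨_, ⟨s, rfl⟩, rfl⟩

lemma prodC_mono {M N : Set ((X × Y) × (X × Y))} (hM : M ∈ prodC cX cY) (hNM : N ⊆ M) :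
    N ∈ prodC cX cY := by
  obtain ⟨M₁, h₁, M₂, h₂, hsub⟩ := hM
  exact ⟨M₁, h₁, M₂, h₂, hNM.trans hsub⟩

lemma isBounded_prodC_prod {M₁ : Set (X × X)} {M₂ : Set (Y × Y)} (h₁ : M₁ ∈ cX)
    (h₂ : M₂ ∈ cY) (x : X × Y) :
    IsBounded (prodC cX cY) ({y | (x.1, y) ∈ M₁} ×ˢ {t | (x.2, t) ∈ M₂}) :=
  ⟨{p | (p.1.1, p.2.1) ∈ M₁ ∧ (p.1.2, p.2.2) ∈ M₂}, ⟨M₁, h₁, M₂, h₂, subset_rfl⟩, x,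
    rfl⟩

lemma isFinUnionBounded_empty : IsFinUnionBounded cX ∅ :=
  ⟨0, fun _ => ∅, fun i => i.elim0, by simp⟩

lemma diagonal_mem_sumC (hX : Set.diagonal X ∈ cX) (hY : Set.diagonal Y ∈ cY) :
    Set.diagonal (X ⊕ Y) ∈ sumC cX cY := by
  refine ⟨_, hX, _, hY, ∅, ∅, isFinUnionBounded_empty, isFinUnionBounded_empty, ?_⟩
  rintro ⟨w, _⟩ (rfl : w = _)
  cases w with
  | inl x => exact Or.inl (Or.inl ⟨(x, x), rfl, rfl⟩)
  | inr y => exact Or.inl (Or.inr ⟨(y, y), rfl, rfl⟩)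

lemma diagonal_mem_piC {ι : Type*} {W : ι → Type*} {c : ∀ i, Set (Set (W i × W i))}
    (h : ∀ i, Set.diagonal (W i) ∈ c i) : Set.diagonal (∀ i, W i) ∈ piC c :=
  ⟨fun i => Set.diagonal (W i), h, fun _ hp i => congrFun hp i⟩

lemma IsCoarseStructure.exists_mem_of_compatible [TopologicalSpace X] [PreconnectedSpace X]
    {c : Set (Set (X × X))} (hc : IsCoarseStructure c) (hcomp : Compatible c) (x y : X) :
    ∃ M ∈ c, (x, y) ∈ M := by
  obtain ⟨U, hU, hUopen, hdiag⟩ := hcomp.1 _ hc.diag_mem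
  set S : Set X := {y | ∃ M ∈ c, (x, y) ∈ M}
  have step : ∀ {y z}, y ∈ S → (y, z) ∈ U → z ∈ S := fun ⟨M, hM, hxy⟩ hyz =>
    ⟨Comp M U, hc.comp_mem hM hU, _, hxy, hyz⟩
  have hopen : IsOpen S := isOpen_iff_forall_mem_open.2 fun y hy =>
    ⟨{z | (y, z) ∈ U}, fun _ => step hy, hUopen.preimage (by fun_prop), hdiag rfl⟩
  have hclosed : IsClosed S := isOpen_compl_iff.1 <| isOpen_iff_forall_mem_open.2 fun y hy =>
    ⟨{z | (z, y) ∈ U}, fun _ hz hzS => hy (step hzS hz), hUopen.preimage (by fun_prop),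
      hdiag rfl⟩
  have hS : S = Set.univ := IsClopen.eq_univ ⟨hclosed, hopen⟩ ⟨x, _, hc.diag_mem, rfl⟩
  exact (hS ▸ Set.mem_univ y : y ∈ S)

variable {c : Set (Set (ℝ≥0 × ℝ≥0))}

lemma IsGeneralisedRay.exists_shift_mem (hc : IsGeneralisedRay c) (a : ℝ≥0) :
    ∃ W ∈ c, ∀ t, (a + t, t) ∈ W := by
  obtain ⟨N, hN, haN⟩ := hc.coarse.exists_mem_of_compatible hc.compatible a 0
  exact ⟨_, hc.sum_mem hN hc.coarse.diag_mem, fun t => ⟨a, 0, t, t, haN, rfl, by simp⟩⟩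

variable (a : ℝ≥0)

def shiftUp (q : X × ℝ≥0) : {q : X × ℝ≥0 | a ≤ q.2} :=
  ⟨(q.1, a + q.2), show a ≤ a + q.2 from le_self_add⟩

lemma close_shiftUp (hX : Set.diagonal X ∈ cX) (hc : IsGeneralisedRay c) :
    Close (prodC cX c) (Subtype.val ∘ shiftUp a) id := by
  obtain ⟨W, hW, hshift⟩ := hc.exists_shift_mem a
  refine ⟨_, hX, W, hW, ?_⟩
  rintro _ ⟨q, rfl⟩
  exact ⟨rfl, hshift q.2⟩

lemma isCoarseMap_shiftUp (hc : IsGeneralisedRay c) :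
    IsCoarseMap (prodC cX c) (subC (prodC cX c) {q | a ≤ q.2}) (shiftUp a) := by
  obtain ⟨W, hW, hshift⟩ := hc.exists_shift_mem a
  constructor
  · rintro M ⟨M₁, h₁, M₂, h₂, hsub⟩
    refine ⟨M₁, h₁, _, hc.translate_mem a h₂, ?_⟩
    rintro _ ⟨_, ⟨p, hp, rfl⟩, rfl⟩
    exact ⟨(hsub hp).1, p.1.2, p.2.2, (hsub hp).2, rfl⟩
  · rintro _ ⟨M, ⟨M₁, h₁, M₂, h₂, hsub⟩, x, rfl⟩
    refine (isBounded_prodC_prod h₁ (hc.coarse.comp_mem h₂ hW) x.1).mono_s7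
      (fun _ _ => prodC_mono) fun q hq => ?_
    obtain ⟨h1, h2⟩ := hsub ⟨(x, shiftUp a q), hq, rfl⟩
    exact ⟨h1, a + q.2, h2, hshift q.2⟩

lemma isCoarseMap_subtype_val (hc : IsGeneralisedRay c) :
    IsCoarseMap (subC (prodC cX c) {q | a ≤ q.2}) (prodC cX c) Subtype.val := by
  refine ⟨fun _ hM => hM, ?_⟩
  rintro _ ⟨K, ⟨M₁, h₁, M₂, h₂, hsub⟩, q, rfl⟩
  obtain ⟨W, hW, hshift⟩ := hc.exists_shift_mem a
  -- `q` may lie outside the subspace, so the slice `K_q` is rebased at `shiftUp a q` through `W`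
  refine ⟨{p | p.1 = shiftUp a q ∧ (q, (p.2 : X × ℝ≥0)) ∈ K},
    ⟨M₁, h₁, Comp W M₂, hc.coarse.comp_mem hW h₂, ?_⟩, shiftUp a q, ?_⟩
  · rintro _ ⟨⟨_, y⟩, ⟨rfl, hy⟩, rfl⟩
    exact ⟨(hsub hy).1, q.2, hshift q.2, (hsub hy).2⟩
  · ext y
    simp

theorem isCoarseEquiv_subtype_val (hX : Set.diagonal X ∈ cX) (hc : IsGeneralisedRay c) :
    IsCoarseEquiv (subC (prodC cX c) {q | a ≤ q.2}) (prodC cX c) Subtype.val :=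
  ⟨isCoarseMap_subtype_val a hc, shiftUp a, isCoarseMap_shiftUp a hc,
    close_subC_iff.2 ((close_shiftUp a hX hc).comp_right_s7 (fun _ _ => prodC_mono) _),
    close_shiftUp a hX hc⟩

end

theorem disk_inclusion_coarse_equiv_general
    (c : Set (Set (ℝ≥0 × ℝ≥0))) (hc : IsGeneralisedRay c) (n : ℕ) :
    IsCoarseEquiv (subC (diskC c n) {q : DiskT n | 1 ≤ q.2}) (diskC c n)
        (fun q : ↥{q : DiskT n | 1 ≤ q.2} => (q : DiskT n)) ∧
      CoarselyEquivalent (subC (diskC c n) {q : DiskT n | 1 ≤ q.2}) (diskC c n) := by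
  have hdiag : Set.diagonal _ ∈ piC fun _ : Fin n => sumC c c :=
    diagonal_mem_piC fun _ => diagonal_mem_sumC hc.coarse.diag_mem hc.coarse.diag_mem
  have h := isCoarseEquiv_subtype_val 1 hdiag hc
  exact ⟨h, _, h⟩

/-- For a generalised ray `R` and `n ≥ 1`, the inclusion of
`(D_R^n)' = {(x,t) ∈ (R ∨ R)ⁿ × R | t ≥ 1}` into the coarse disk `D_R^n = (R ∨ R)ⁿ × R`
is a coarse equivalence; in particular `D_R^n` and `(D_R^n)'` are coarsely equivalent. -/
theorem disk_inclusion_coarse_equiv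
    (c : Set (Set (ℝ≥0 × ℝ≥0))) (hc : IsGeneralisedRay c) (n : ℕ) (hn : 1 ≤ n) :
    IsCoarseEquiv (subC (diskC c n) {q : DiskT n | 1 ≤ q.2}) (diskC c n)
        (fun q : ↥{q : DiskT n | 1 ≤ q.2} => (q : DiskT n)) ∧
      CoarselyEquivalent (subC (diskC c n) {q : DiskT n | 1 ≤ q.2}) (diskC c n) :=
  disk_inclusion_coarse_equiv_general c hc n

end CoarsePaper
end
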